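/- Let R > 0, n ≥ 1, and let λ₁, …, λₙ ∈ ℝ be all nonzero. If |x| ≤ R and t ≥ 0, then the Lebesgue measure of the union ⋃_{i=1}^n {s ∈ [0, t] : |x − λᵢ·(t − s)| ≤ R} is at most max_{1 ≤ i ≤ n} 2R/|λᵢ|. -/

import Mathlib

open MeasureTheory Set

/-- The paper's `I_λ(x, t)`. -/
def undampedTimes (R lam x t : ℝ) : Set ℝ :=
  {s | s ∈ Icc 0 t ∧ |x - lam * (t - s)| ≤ R}

/-- Both `x` and `x - λ (t - s)` lie in `[-R, R]`, so the distance `|λ| (t - s)` between them is at most `2R`. -/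
theorem undampedTimes_subset_Icc {R lam x t : ℝ} (hlam : lam ≠ 0) (hx : |x| ≤ R) :
    undampedTimes R lam x t ⊆ Icc (t - 2 * R / |lam|) t := by
  rintro s ⟨⟨-, hst⟩, hs⟩
  have hdist : |lam| * (t - s) ≤ 2 * R := by
    rw [← abs_of_nonneg (sub_nonneg.mpr hst), ← abs_mul]
    rw [abs_le] at hs hx ⊢
    constructor <;> linarith
  refine ⟨?_, hst⟩
  rw [sub_le_comm, le_div_iff₀ (abs_pos.mpr hlam), mul_comm]
  exact hdist

theorem volume_iUnion_le_of_subset_Icc {ι : Sort*} {s : ι → Set ℝ} {t M : ℝ}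
    (hs : ∀ i, s i ⊆ Icc (t - M) t) : volume (⋃ i, s i) ≤ ENNReal.ofReal M := by
  calc volume (⋃ i, s i) ≤ volume (Icc (t - M) t) := measure_mono (iUnion_subset hs)
    _ = ENNReal.ofReal M := by rw [Real.volume_Icc, sub_sub_cancel]

theorem stmt_11_general (R : ℝ) (n : ℕ) (hn : 1 ≤ n) (lam : Fin n → ℝ)
    (hlam : ∀ i, lam i ≠ 0) (x t : ℝ) (hx : |x| ≤ R) :
    MeasureTheory.volume
        (⋃ i : Fin n, {s : ℝ | s ∈ Set.Icc 0 t ∧ |x - lam i * (t - s)| ≤ R})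
      ≤ ENNReal.ofReal
          (Finset.univ.sup' ⟨⟨0, hn⟩, Finset.mem_univ _⟩
            (fun i : Fin n => 2 * R / |lam i|)) := by
  refine volume_iUnion_le_of_subset_Icc (t := t) fun i => ?_
  refine (undampedTimes_subset_Icc (hlam i) hx).trans (Icc_subset_Icc ?_ le_rfl)
  exact sub_le_sub_left (Finset.le_sup' (fun i : Fin n => 2 * R / |lam i|) (Finset.mem_univ i)) t

/-- If the observation point `x` lies inside the undamped region `[−R, R]`, the total
time that the backward characteristics through `(x, t)` spend in the undamped region
is at most `max_{1 ≤ i ≤ n} 2R/|λᵢ|`. -/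
theorem stmt_11 (R : ℝ) (hR : 0 < R) (n : ℕ) (hn : 1 ≤ n) (lam : Fin n → ℝ)
    (hlam : ∀ i, lam i ≠ 0) (x t : ℝ) (hx : |x| ≤ R) (ht : 0 ≤ t) :
    MeasureTheory.volume
        (⋃ i : Fin n, {s : ℝ | s ∈ Set.Icc 0 t ∧ |x - lam i * (t - s)| ≤ R})
      ≤ ENNReal.ofReal
          (Finset.univ.sup' ⟨⟨0, hn⟩, Finset.mem_univ _⟩
            (fun i : Fin n => 2 * R / |lam i|)) :=
  stmt_11_general R n hn lam hlam x t hx
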